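/- Suppose for all i and all j ∈ N_i \ {i} the Tadmor condition ((v_i − v_j)ᵀ/2)[d_{ij}(u_j − u_i) − (f_j + f_i)·c_{ij} + α_{ij} f*_{ij}] ≤ (ψ_j − ψ_i)·c_{ij} holds, where ψ_k = v_kᵀ f_k − q_k. If moreover ∑_{j∈N_i} c_{ij} = 0, then m_i v_iᵀ (du_i/dt) ≤ ∑_{j∈N_i\{i}} [G_{ij} − (q_j − q_i)·c_{ij}], where du_i/dt is given by the flux-corrected scheme m_i (du_i/dt) = ∑_{j∈N_i\{i}} [d_{ij}(u_j−u_i) − (f_j−f_i)·c_{ij} + α_{ij} f*_{ij}] and G_{ij} = ((v_i+v_j)ᵀ/2)[d_{ij}(u_j−u_i) + α_{ij} f*_{ij}] − ((v_i−v_j)ᵀ/2)(f_j − f_i)·c_{ij}. -/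
import Mathlib


open Finset Matrix

/-- Semi-discrete entropy inequality: if the pairwise Tadmor conditions hold
and the discrete gradient operator has zero row sums, then the flux-corrected
scheme satisfies the nodal entropy inequality
`mᵢ vᵢᵀ u̇ᵢ ≤ ∑_{j≠i} [G_{ij} − (qⱼ − qᵢ)·c_{ij}]`. -/
theorem semi_discrete_entropy_inequality {ι : Type*} [DecidableEq ι] {m d : ℕ}
    (Ni : Finset ι) (i : ι) (hi : i ∈ Ni)
    (u v fs : ι → Fin m → ℝ)
    (f : ι → Matrix (Fin m) (Fin d) ℝ)
    (q ψ : ι → Fin d → ℝ)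
    (hψ : ∀ k ∈ Ni, ψ k = Matrix.vecMul (v k) (f k) - q k)
    (c : ι → Fin d → ℝ) (hc : ∑ j ∈ Ni, c j = 0)
    (dcoef α : ι → ℝ) (mi : ℝ) (hmi : 0 < mi)
    (udot : Fin m → ℝ)
    (hudot : mi • udot = ∑ j ∈ Ni.erase i,
      (dcoef j • (u j - u i) - (f j - f i).mulVec (c j) + α j • fs j))
    (htadmor : ∀ j ∈ Ni.erase i,
      (1 / 2) * ((v i - v j) ⬝ᵥ
          (dcoef j • (u j - u i) - (f j + f i).mulVec (c j) + α j • fs j))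
        ≤ (ψ j - ψ i) ⬝ᵥ c j) :
    mi * (v i ⬝ᵥ udot)
      ≤ ∑ j ∈ Ni.erase i,
          (((1 / 2) * ((v i + v j) ⬝ᵥ (dcoef j • (u j - u i) + α j • fs j))
              - (1 / 2) * ((v i - v j) ⬝ᵥ (f j - f i).mulVec (c j)))
            - (q j - q i) ⬝ᵥ c j) := by
  have key : ∀ j ∈ Ni.erase i,
      v i ⬝ᵥ (dcoef j • (u j - u i) - (f j - f i).mulVec (c j) + α j • fs j)
        ≤ ((1 / 2) * ((v i + v j) ⬝ᵥ (dcoef j • (u j - u i) + α j • fs j))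
              - (1 / 2) * ((v i - v j) ⬝ᵥ (f j - f i).mulVec (c j)))
            - (q j - q i) ⬝ᵥ c j := by
    intro j hj
    have hjNi : j ∈ Ni := Finset.mem_of_mem_erase hj
    have h := htadmor j hj
    rw [hψ j hjNi, hψ i hi] at h
    have hid :
        v i ⬝ᵥ (dcoef j • (u j - u i) - (f j - f i).mulVec (c j) + α j • fs j)
          - (((1 / 2) * ((v i + v j) ⬝ᵥ (dcoef j • (u j - u i) + α j • fs j))
              - (1 / 2) * ((v i - v j) ⬝ᵥ (f j - f i).mulVec (c j)))
            - (q j - q i) ⬝ᵥ c j)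
          = (1 / 2) * ((v i - v j) ⬝ᵥ
              (dcoef j • (u j - u i) - (f j + f i).mulVec (c j) + α j • fs j))
            - ((Matrix.vecMul (v j) (f j) - q j)
                - (Matrix.vecMul (v i) (f i) - q i)) ⬝ᵥ c j := by
      simp only [Matrix.sub_mulVec, Matrix.add_mulVec, dotProduct_add,
        dotProduct_sub, sub_dotProduct, add_dotProduct, dotProduct_smul,
        smul_dotProduct, smul_eq_mul, dotProduct_mulVec, Matrix.sub_vecMul,
        Matrix.add_vecMul]
      ring
    linarith
  calc mi * (v i ⬝ᵥ udot) = v i ⬝ᵥ (mi • udot) := by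
        rw [dotProduct_smul, smul_eq_mul]
    _ = ∑ j ∈ Ni.erase i,
          v i ⬝ᵥ (dcoef j • (u j - u i) - (f j - f i).mulVec (c j) + α j • fs j) := by
        rw [hudot]
        simp only [dotProduct, Finset.sum_apply, Finset.mul_sum]
        exact Finset.sum_comm
    _ ≤ _ := Finset.sum_le_sum key
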